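/- arXiv:2403.17758 — 2 statements merged into one kernel-verified Lean document; each statement's English description precedes it below -/
import Mathlib

section
/- Let p, q be coprime integers with q ≥ 1, and let α ∈ ℝ. Let m₁ < m₂ < ⋯ < m_r be the admissible indices in {0,…,q−1} (one has r = q if q is odd and r = q/2 if q is even). For each admissible n set A_n = cos α · I₂ + i sin α · M(θ_n), a 2×2 complex matrix. Then (1/2)·Tr(A_{m_r} A_{m_{r−1}} ⋯ A_{m_1}) = (cos α)^q if q is odd, and (1/2)·Tr(A_{m_r} A_{m_{r−1}} ⋯ A_{m_1}) = (cos α)^{q/2} if q is even. -/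
open scoped Classical

/-- The generalized quadratic Gauss sum `G(-p, n, q) = ∑_{k=0}^{q-1} e(( -p k² + n k)/q)`. -/
noncomputable def Gm (p : ℤ) (q : ℕ) (n : ℤ) : ℂ :=
  ∑ k ∈ Finset.range q,
    Complex.exp (2 * Real.pi * Complex.I *
      ((-(p : ℂ) * (k : ℂ) ^ 2 + (n : ℂ) * (k : ℂ)) / (q : ℂ)))

/-- `θ_n`, the argument of `G(-p, n, q)`. -/
noncomputable def theta (p : ℤ) (q : ℕ) (n : ℕ) : ℝ := (Gm p q (n : ℤ)).arg

/-- `n` is admissible when `4 ∤ (2n + 2 - q)`. -/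
def Adm (q n : ℕ) : Prop := ¬ ((4 : ℤ) ∣ (2 * (n : ℤ) + 2 - (q : ℤ)))

/-- The 2×2 matrix with zero diagonal, top-right entry `e^{-iφ}`, bottom-left entry `e^{iφ}`. -/
noncomputable def Mmat (φ : ℝ) : Matrix (Fin 2) (Fin 2) ℂ :=
  !![0, Complex.exp (-(φ : ℂ) * Complex.I); Complex.exp ((φ : ℂ) * Complex.I), 0]

/-- The admissible indices in `{0, …, q-1}` listed in increasing order. -/
noncomputable def admList (q : ℕ) : List ℕ := (List.range q).filter (fun n => Adm q n)

/-!
Write `u_n = e^{iθ_n} = G(-p,n,q) / |G(-p,n,q)|` and `ζ = e^{2πi/q}`. Completing the square gives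
`G(-p, n + 2pj, q) = ζ^{nj + pj²} G(-p, n, q)`, and the admissible indices form a progression
`n₀ + s m` (`s = 1` or `2`, `m < N`) that is also stepped through by multiples of `2p` modulo `q`.
Hence the phases are quadratic, `u_m = ζ^{Am² + Bm} z`, with `ω = ζ^{2A}` a primitive `N`-th root
of unity; and `M(θ) = offDiag (e^{iθ})`. The phases are defined because at the base index
`G_ζ · G_{ζ⁻¹} = q ∑_{d < q, q ∣ 2pd} ζ^{-pd² + nd}`, which is `q` for odd `q`, `2q` for even `q`.

Expanding `∏ (x + y M(θ_m))`, a word in the `M`'s has trace `0` if its length is odd and `ρ⁻¹ + ρ`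
if it is even, `ρ` being the alternating product of its phases. Replacing `u_m` by `u_m ω^{tm}`
multiplies `ρ` by `ω^{tL}`, where `0 < L < N` is the alternating sum of the indices of the word, so
averaging over `t < N` kills every nonempty word and leaves `2 xᴺ`. On the other hand, since the
phases are quadratic, `u_m ω^{tm}` is a constant multiple of `u_{(m+t) mod N}`: the twist is a
diagonal conjugation followed by a cyclic rotation of the factors, and does not change the trace.
-/

open Matrix (trace trace_mul_comm trace_fin_two_of trace_sum trace_smul trace_units_conj)

theorem List.prod_map_units_conj {M : Type*} [Monoid M] (D : Mˣ) (l : List M) :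
    (l.map fun a => (D : M) * a * ↑D⁻¹).prod = D * l.prod * ↑D⁻¹ := by
  induction l with
  | nil => simp
  | cons a l ih => rw [List.map_cons, List.prod_cons, ih]; simp [mul_assoc]

theorem List.prod_map_smul_one_add {R A ι : Type*} [CommSemiring R] [Semiring A] [Algebra R A]
    (x y : R) (M : ι → A) (l : List ι) :
    (l.map fun i => x • (1 : A) + y • M i).prod
      = (l.sublists'.map fun S =>
          (x ^ (l.length - S.length) * y ^ S.length) • (S.map M).prod).sum := by
  induction l with
  | nil => simp
  | cons a l ih =>
    rw [List.map_cons, List.prod_cons, ih, List.sublists'_cons, List.map_append, List.sum_append,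
      add_mul, ← List.sum_map_mul_left, ← List.sum_map_mul_left, List.map_map]
    congr 1 <;> refine congrArg List.sum (List.map_congr_left fun S hS => ?_)
    · have := (List.mem_sublists'.mp hS).length_le
      simp only [smul_one_mul, smul_smul, List.length_cons]
      rw [show l.length + 1 - S.length = l.length - S.length + 1 by omega]
      ring_nf
    · simp only [Function.comp_apply, smul_mul_smul_comm, List.length_cons, List.map_cons,
        List.prod_cons, Nat.add_sub_add_right]
      ring_nf

theorem List.alternatingSum_pos_lt :
    ∀ (l : List ℕ) (N : ℕ), l.Pairwise (· > ·) → (∀ a ∈ l, a < N) → Even l.length → l ≠ [] →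
      0 < (l.map ((↑) : ℕ → ℤ)).alternatingSum ∧ (l.map ((↑) : ℕ → ℤ)).alternatingSum < N
  | [], _, _, _, _, h => absurd rfl h
  | [_], _, _, _, h, _ => by simp at h
  | a :: b :: l, N, hl, hN, he, _ => by
    obtain ⟨hbl, hl'⟩ := List.pairwise_cons.mp (List.pairwise_cons.mp hl).2
    have hab : b < a := (List.pairwise_cons.mp hl).1 b (by simp)
    have ha : a < N := hN a (by simp)
    simp only [List.map_cons, List.alternatingSum_cons_cons]
    rcases eq_or_ne l [] with rfl | hne
    · simp only [List.map_nil, List.alternatingSum_nil]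
      omega
    · have := List.alternatingSum_pos_lt l b hl' hbl (by simpa [Nat.even_add_one] using he) hne
      omega

theorem List.filter_range_two_mul_mod_two {e : ℕ} (he : e < 2) (r : ℕ) :
    (List.range (2 * r)).filter (fun n => n % 2 = e) = (List.range r).map (e + 2 * ·) := by
  induction r with
  | zero => simp
  | succ r ih =>
    rw [Nat.mul_succ, List.range_succ, List.range_succ, List.range_succ, List.filter_append,
      List.filter_append, ih, List.map_append, List.append_assoc]
    congr 1
    interval_cases e <;> simp [Nat.add_mod, add_comm]

theorem Function.Periodic.sum_range_add {M : Type*} [AddCancelCommMonoid M] {f : ℤ → M}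
    {q : ℕ} (hf : Function.Periodic f q) (j : ℤ) :
    ∑ k ∈ Finset.range q, f (k + j) = ∑ k ∈ Finset.range q, f k := by
  have step : ∀ g : ℤ → M, Function.Periodic g q →
      ∑ k ∈ Finset.range q, g (k + 1) = ∑ k ∈ Finset.range q, g k := fun g hg => by
    have h := (Finset.sum_range_succ' (fun k : ℕ => g k) q).symm.trans
      (Finset.sum_range_succ (fun k : ℕ => g k) q)
    rw [show g (q : ℕ) = g ((0 : ℕ) : ℤ) by simpa using hg 0] at h
    push_cast at h
    exact add_right_cancel h
  induction j using Int.induction_on with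
  | zero => simp
  | succ i ih =>
    rw [← ih, ← step _ (hf.add_const i)]
    exact Finset.sum_congr rfl fun k _ => congrArg f (by ring)
  | pred i ih =>
    rw [← ih, ← step _ (hf.add_const (-(i : ℤ) - 1))]
    exact Finset.sum_congr rfl fun k _ => congrArg f (by ring)

section RootsOfUnity

variable {K : Type*} [Field K] {ζ : K} {q : ℕ}

theorem IsPrimitiveRoot.zpow_eq_zpow_of_modEq (hζ : IsPrimitiveRoot ζ q) {e e' : ℤ}
    (h : e ≡ e' [ZMOD q]) : ζ ^ e = ζ ^ e' := by
  rcases eq_or_ne q 0 with rfl | hq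
  · simp only [Int.ModEq, Nat.cast_zero, Int.emod_zero] at h
    rw [h]
  obtain ⟨X, hX⟩ := h.symm.dvd
  rw [show e = e' + q * X by omega, zpow_add₀ (hζ.ne_zero hq), zpow_mul, hζ.zpow_eq_one,
    one_zpow, mul_one]

theorem IsPrimitiveRoot.geom_sum_zpow (hζ : IsPrimitiveRoot ζ q) (L : ℤ) :
    ∑ t ∈ Finset.range q, (ζ ^ L) ^ t = if (q : ℤ) ∣ L then (q : K) else 0 := by
  split_ifs with hL
  · simp [(hζ.zpow_eq_one_iff_dvd L).mpr hL]
  · rw [geom_sum_eq (mt (hζ.zpow_eq_one_iff_dvd L).mp hL), ← zpow_natCast, ← zpow_mul,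
      mul_comm, zpow_mul, hζ.zpow_eq_one, one_zpow, sub_self, zero_div]

theorem IsPrimitiveRoot.periodic_zpow_quadratic (hζ : IsPrimitiveRoot ζ q) (a b c : ℤ) :
    Function.Periodic (fun k : ℤ => ζ ^ (a * k ^ 2 + b * k + c)) q := fun k =>
  hζ.zpow_eq_zpow_of_modEq <| Int.modEq_iff_dvd.mpr ⟨-(2 * a * k + a * q + b), by ring⟩

end RootsOfUnity

section OffDiag

variable {K : Type*} [Field K]

def offDiag (u : K) : Matrix (Fin 2) (Fin 2) K := !![0, u⁻¹; u, 0]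

theorem offDiag_mul_offDiag (a b : K) :
    offDiag a * offDiag b = !![(a / b)⁻¹, 0; 0, a / b] := by
  simp [offDiag, div_eq_mul_inv, mul_comm]

theorem prod_map_offDiag_of_even :
    ∀ l : List K, Even l.length →
      (l.map offDiag).prod = !![l.alternatingProd⁻¹, 0; 0, l.alternatingProd]
  | [], _ => by simp [Matrix.one_fin_two]
  | [_], h => by simp at h
  | a :: b :: l, h => by
    have hl : Even l.length := by simpa [Nat.even_add_one] using h
    rw [List.map_cons, List.map_cons, List.prod_cons, List.prod_cons, ← mul_assoc,
      offDiag_mul_offDiag, prod_map_offDiag_of_even l hl, List.alternatingProd_cons_cons,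
      Matrix.mul_fin_two, mul_inv]
    simp [mul_comm]

theorem trace_prod_map_offDiag_of_even {ι : Type*} (f : ι → K) {l : List ι}
    (h : Even l.length) :
    trace (l.map fun i => offDiag (f i)).prod
      = (l.map f).alternatingProd⁻¹ + (l.map f).alternatingProd := by
  have := prod_map_offDiag_of_even (l.map f) (by simpa using h)
  rw [List.map_map, Function.comp_def] at this
  rw [this, trace_fin_two_of]

theorem trace_prod_map_offDiag_of_odd {ι : Type*} (f : ι → K) {l : List ι}
    (h : Odd l.length) : trace (l.map fun i => offDiag (f i)).prod = 0 := by
  obtain ⟨a, l, rfl⟩ := List.exists_cons_of_length_pos h.pos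
  have hl : Even (l.map f).length := by
    simpa [Nat.odd_add_one, Nat.not_odd_iff_even] using h
  have := prod_map_offDiag_of_even (l.map f) hl
  rw [List.map_map, Function.comp_def] at this
  rw [List.map_cons, List.prod_cons, this, offDiag, Matrix.mul_fin_two, trace_fin_two_of]
  simp

theorem alternatingProd_map_mul_pow (u : ℕ → K) {w : K} (hw : w ≠ 0) :
    ∀ l : List ℕ, (l.map fun m => u m * w ^ m).alternatingProd
      = (l.map u).alternatingProd * w ^ (l.map ((↑) : ℕ → ℤ)).alternatingSum
  | [] => by simp
  | [a] => by simp
  | a :: b :: l => by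
    simp only [List.map_cons, List.alternatingProd_cons_cons, List.alternatingSum_cons_cons,
      alternatingProd_map_mul_pow u hw l, mul_div_mul_comm, zpow_add₀ hw, zpow_sub₀ hw,
      zpow_natCast]
    ring

theorem smul_one_add_smul_offDiag (x y w : K) :
    x • (1 : Matrix (Fin 2) (Fin 2) K) + y • offDiag w = !![x, y * w⁻¹; y * w, x] := by
  ext i j
  fin_cases i <;> fin_cases j <;> simp [offDiag]

theorem smul_one_add_smul_offDiag_mul (x y : K) {v : K} (hv : v ≠ 0) (w : K) :
    x • (1 : Matrix (Fin 2) (Fin 2) K) + y • offDiag (v * w)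
      = !![1, 0; 0, v] * (x • 1 + y • offDiag w) * !![1, 0; 0, v⁻¹] := by
  rw [smul_one_add_smul_offDiag, smul_one_add_smul_offDiag, Matrix.mul_fin_two,
    Matrix.mul_fin_two]
  simp [hv, mul_comm, mul_left_comm]

end OffDiag

section Rotation

variable {n R : Type*} [Fintype n] [DecidableEq n] [CommSemiring R]

theorem trace_prod_map_range_succ_mod (N : ℕ) (f : ℕ → Matrix n n R) :
    trace (((List.range N).reverse.map fun m => f ((m + 1) % N)).prod)
      = trace ((List.range N).reverse.map f).prod := by
  rcases N with _ | N
  · simp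
  have hfirst : (List.range (N + 1)).reverse.map (fun m => f ((m + 1) % (N + 1)))
      = f 0 :: (List.range N).reverse.map (fun m => f (m + 1)) := by
    rw [List.range_succ, List.reverse_append, List.reverse_singleton, List.singleton_append,
      List.map_cons, Nat.mod_self]
    congr 1
    refine List.map_congr_left fun m hm => ?_
    rw [Nat.mod_eq_of_lt (by simpa using hm)]
  have hlast : (List.range (N + 1)).reverse.map f
      = (List.range N).reverse.map (fun m => f (m + 1)) ++ [f 0] := by
    rw [List.range_succ_eq_map, List.reverse_cons, List.map_append, ← List.map_reverse,
      List.map_map]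
    rfl
  rw [hfirst, hlast, List.prod_cons, List.prod_append, List.prod_singleton, trace_mul_comm]

theorem trace_prod_map_range_add_mod (N t : ℕ) (f : ℕ → Matrix n n R) :
    trace (((List.range N).reverse.map fun m => f ((m + t) % N)).prod)
      = trace ((List.range N).reverse.map f).prod := by
  induction t with
  | zero =>
    congr 2
    refine List.map_congr_left fun m hm => ?_
    rw [Nat.add_zero, Nat.mod_eq_of_lt (by simpa using hm)]
  | succ t ih =>
    rw [← ih, ← trace_prod_map_range_succ_mod N (fun m => f ((m + t) % N))]
    congr 2
    refine List.map_congr_left fun m _ => ?_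
    rw [Nat.mod_add_mod, Nat.add_right_comm, Nat.add_assoc]

end Rotation

section Averaging

variable {K : Type*} [Field K] {ω : K} {N : ℕ}

theorem sum_trace_prod_offDiag_twist_eq_zero (hω : IsPrimitiveRoot ω N) (u : ℕ → K)
    {S : List ℕ} (hS : S.Sublist (List.range N).reverse) (hne : S ≠ []) :
    ∑ t ∈ Finset.range N, trace ((S.map fun m => offDiag (u m * ω ^ (t * m))).prod) = 0 := by
  rcases Nat.even_or_odd S.length with he | ho
  swap
  · exact Finset.sum_eq_zero fun t _ => trace_prod_map_offDiag_of_odd _ ho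
  have hω0 : ω ≠ 0 := hω.ne_zero (by rintro rfl; simp_all)
  set L := (S.map ((↑) : ℕ → ℤ)).alternatingSum
  obtain ⟨hL0, hLN⟩ := S.alternatingSum_pos_lt N
    ((List.pairwise_reverse.mpr List.pairwise_lt_range).sublist hS)
    (fun a ha => by simpa using hS.subset ha) he hne
  have hL : ¬ (N : ℤ) ∣ L := fun h => (Int.le_of_dvd hL0 h).not_gt hLN
  set ρ := (S.map u).alternatingProd
  have hterm : ∀ t : ℕ, trace ((S.map fun m => offDiag (u m * ω ^ (t * m))).prod)
      = ρ⁻¹ * (ω ^ (-L)) ^ t + ρ * (ω ^ L) ^ t := fun t => by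
    have hcomm : ∀ M : ℤ, (ω ^ t) ^ M = (ω ^ M) ^ t := fun M => by
      rw [← zpow_natCast, ← zpow_natCast, ← zpow_mul, ← zpow_mul, mul_comm]
    simp only [pow_mul]
    rw [trace_prod_map_offDiag_of_even _ he, alternatingProd_map_mul_pow u (pow_ne_zero t hω0),
      mul_inv, ← zpow_neg, hcomm, hcomm]
  rw [Finset.sum_congr rfl fun t _ => hterm t, Finset.sum_add_distrib, ← Finset.mul_sum,
    ← Finset.mul_sum, hω.geom_sum_zpow, hω.geom_sum_zpow, if_neg hL, if_neg (by simpa using hL)]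
  simp

theorem sum_trace_prod_one_add_offDiag_twist (hω : IsPrimitiveRoot ω N) (u : ℕ → K) (x y : K) :
    ∑ t ∈ Finset.range N, trace (((List.range N).reverse.map
        fun m => x • (1 : Matrix (Fin 2) (Fin 2) K) + y • offDiag (u m * ω ^ (t * m))).prod)
      = N * (2 * x ^ N) := by
  set l := (List.range N).reverse
  have hnd : l.sublists'.Nodup :=
    List.nodup_sublists'.mpr (List.nodup_reverse.mpr List.nodup_range)
  simp only [List.prod_map_smul_one_add, ← List.sum_toFinset _ hnd, trace_sum, trace_smul,
    smul_eq_mul]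
  rw [Finset.sum_comm, Finset.sum_eq_single ([] : List ℕ)]
  · simp only [l, List.length_reverse, List.length_range, List.length_nil, List.map_nil,
      List.prod_nil, Matrix.trace_one, Finset.sum_const, Finset.card_range, nsmul_eq_mul,
      Fintype.card_fin, Nat.sub_zero, pow_zero]
    push_cast
    ring
  · intro S hS hne
    rw [← Finset.mul_sum, sum_trace_prod_offDiag_twist_eq_zero hω u
      (List.mem_sublists'.mp (List.mem_toFinset.mp hS)) hne, mul_zero]
  · intro h
    exact absurd (List.mem_toFinset.mpr (List.mem_sublists'.mpr (List.nil_sublist l))) h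

theorem trace_prod_one_add_offDiag_shift {t : ℕ} {u u' : ℕ → K} {v : K} (hv : v ≠ 0)
    (h : ∀ m < N, u' m = v * u ((m + t) % N)) (x y : K) :
    trace (((List.range N).reverse.map
        fun m => x • (1 : Matrix (Fin 2) (Fin 2) K) + y • offDiag (u' m)).prod)
      = trace (((List.range N).reverse.map fun m => x • 1 + y • offDiag (u m)).prod) := by
  let D : (Matrix (Fin 2) (Fin 2) K)ˣ :=
    ⟨!![1, 0; 0, v], !![1, 0; 0, v⁻¹], by simp [Matrix.one_fin_two, hv],
      by simp [Matrix.one_fin_two, hv]⟩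
  calc _ = trace ((((List.range N).reverse.map
          fun m => x • (1 : Matrix (Fin 2) (Fin 2) K) + y • offDiag (u ((m + t) % N))).map
          fun a => (D : Matrix (Fin 2) (Fin 2) K) * a * ↑D⁻¹).prod) := by
        rw [List.map_map]
        congr 2
        refine List.map_congr_left fun m hm => ?_
        rw [h m (by simpa using hm), smul_one_add_smul_offDiag_mul x y hv]
        rfl
    _ = _ := by
        rw [List.prod_map_units_conj, trace_units_conj,
          trace_prod_map_range_add_mod N t (fun k => x • 1 + y • offDiag (u k))]

theorem trace_prod_one_add_offDiag_eq_two_mul_pow (hω : IsPrimitiveRoot ω N) (u : ℕ → K)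
    (hu : ∀ t < N, ∃ v ≠ 0, ∀ m < N, u m * ω ^ (t * m) = v * u ((m + t) % N)) (x y : K) :
    trace (((List.range N).reverse.map
        fun m => x • (1 : Matrix (Fin 2) (Fin 2) K) + y • offDiag (u m)).prod) = 2 * x ^ N := by
  rcases N.eq_zero_or_pos with rfl | hN
  · simp [Matrix.trace_one]
  have : NeZero N := ⟨hN.ne'⟩
  have hsum := sum_trace_prod_one_add_offDiag_twist hω u x y
  rw [Finset.sum_congr rfl fun t ht => by
      obtain ⟨v, hv, h⟩ := hu t (Finset.mem_range.mp ht)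
      exact trace_prod_one_add_offDiag_shift hv h x y,
    Finset.sum_const, Finset.card_range, nsmul_eq_mul] at hsum
  exact mul_left_cancel₀ hω.neZero'.out hsum

theorem trace_prod_one_add_offDiag_quadratic {ζ : K} (hζ : ζ ≠ 0) {A B : ℤ}
    (hω : IsPrimitiveRoot (ζ ^ (2 * A)) N) (hper : ζ ^ (A * N ^ 2 + B * N) = 1) (z x y : K) :
    trace (((List.range N).reverse.map fun m : ℕ =>
        x • (1 : Matrix (Fin 2) (Fin 2) K) + y • offDiag (ζ ^ (A * m ^ 2 + B * m) * z)).prod)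
      = 2 * x ^ N := by
  set e : ℕ → K := fun k => ζ ^ (A * k ^ 2 + B * k)
  have he : Function.Periodic e N := fun k => by
    have h2 : ζ ^ (2 * A * N * k) = 1 := by rw [zpow_mul, zpow_mul, hω.zpow_eq_one, one_zpow]
    simp only [e]
    push_cast
    rw [show A * (k + N) ^ 2 + B * (k + N) = (A * k ^ 2 + B * k) + 2 * A * N * k
      + (A * N ^ 2 + B * N) by ring, zpow_add₀ hζ, zpow_add₀ hζ, h2, hper, mul_one, mul_one]
  refine trace_prod_one_add_offDiag_eq_two_mul_pow hω (fun m => e m * z) (fun t _ => ?_) x y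
  refine ⟨ζ ^ (-(A * t ^ 2 + B * t)), zpow_ne_zero _ hζ, fun m _ => ?_⟩
  rw [he.map_mod_nat]
  simp only [e]
  rw [← zpow_natCast, ← zpow_mul]
  push_cast
  rw [mul_right_comm, ← zpow_add₀ hζ, ← mul_assoc (ζ ^ _), ← zpow_add₀ hζ]
  congr 2
  ring

end Averaging

section GaussSum

variable {K : Type*} [Field K] {ζ : K} {q : ℕ}

def quadGaussSum (ζ : K) (q : ℕ) (a b : ℤ) : K :=
  ∑ k ∈ Finset.range q, ζ ^ (a * k ^ 2 + b * k)

theorem quadGaussSum_sub (hζ : IsPrimitiveRoot ζ q) (a b j : ℤ) :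
    quadGaussSum ζ q a (b - 2 * a * j) = ζ ^ (b * j - a * j ^ 2) * quadGaussSum ζ q a b := by
  rcases eq_or_ne q 0 with rfl | hq
  · simp [quadGaussSum]
  have h := (hζ.periodic_zpow_quadratic a (b - 2 * a * j) 0).sum_range_add j
  simp only [add_zero] at h
  rw [quadGaussSum, ← h, quadGaussSum, Finset.mul_sum]
  refine Finset.sum_congr rfl fun k _ => ?_
  rw [← zpow_add₀ (hζ.ne_zero hq)]
  ring_nf

theorem quadGaussSum_of_modEq (hζ : IsPrimitiveRoot ζ q) {a b b' : ℤ} (j : ℤ)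
    (h : b' ≡ b - 2 * a * j [ZMOD q]) :
    quadGaussSum ζ q a b' = ζ ^ (b * j - a * j ^ 2) * quadGaussSum ζ q a b := by
  rw [← quadGaussSum_sub hζ]
  exact Finset.sum_congr rfl fun k _ =>
    hζ.zpow_eq_zpow_of_modEq ((h.mul_right _).add_left _)

theorem quadGaussSum_mul_inv (hζ : IsPrimitiveRoot ζ q) (a b : ℤ) :
    quadGaussSum ζ q a b * quadGaussSum ζ⁻¹ q a b
      = q * ∑ d ∈ (Finset.range q).filter (fun d : ℕ => (q : ℤ) ∣ 2 * a * d),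
          ζ ^ (a * d ^ 2 + b * d) := by
  rcases eq_or_ne q 0 with rfl | hq
  · simp [quadGaussSum]
  have hζ0 := hζ.ne_zero hq
  calc quadGaussSum ζ q a b * quadGaussSum ζ⁻¹ q a b
      = ∑ l ∈ Finset.range q, ∑ k ∈ Finset.range q,
          ζ ^ (a * k ^ 2 + b * k + -(a * l ^ 2 + b * l)) := by
        rw [quadGaussSum, quadGaussSum, Finset.sum_mul_sum, Finset.sum_comm]
        refine Finset.sum_congr rfl fun l _ => Finset.sum_congr rfl fun k _ => ?_
        rw [inv_zpow', ← zpow_add₀ hζ0]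
    _ = ∑ l ∈ Finset.range q, ∑ d ∈ Finset.range q,
          ζ ^ (a * d ^ 2 + b * d) * (ζ ^ (2 * a * d)) ^ l := by
        refine Finset.sum_congr rfl fun l _ => ?_
        rw [← (hζ.periodic_zpow_quadratic a b (-(a * l ^ 2 + b * l))).sum_range_add l]
        refine Finset.sum_congr rfl fun d _ => ?_
        rw [← zpow_natCast, ← zpow_mul, ← zpow_add₀ hζ0]
        ring_nf
    _ = ∑ d ∈ Finset.range q,
          ζ ^ (a * d ^ 2 + b * d) * if (q : ℤ) ∣ 2 * a * d then (q : K) else 0 := by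
        rw [Finset.sum_comm]
        refine Finset.sum_congr rfl fun d _ => ?_
        rw [← Finset.mul_sum, hζ.geom_sum_zpow]
    _ = _ := by
        rw [Finset.sum_filter, Finset.mul_sum]
        refine Finset.sum_congr rfl fun d _ => ?_
        split_ifs <;> ring

theorem quadGaussSum_ne_zero_of_isCoprime (hζ : IsPrimitiveRoot ζ q) (hq : q ≠ 0) {a : ℤ}
    (ha : IsCoprime (2 * a) q) (b : ℤ) : quadGaussSum ζ q a b ≠ 0 := by
  have hfilter : (Finset.range q).filter (fun d : ℕ => (q : ℤ) ∣ 2 * a * d) = {0} := by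
    ext d
    simp only [Finset.mem_filter, Finset.mem_range, Finset.mem_singleton]
    refine ⟨fun ⟨hd, hdvd⟩ => Nat.eq_zero_of_dvd_of_lt ?_ hd,
      fun h => by simp [h, Nat.pos_of_ne_zero hq]⟩
    exact Int.natCast_dvd_natCast.mp (ha.symm.dvd_of_dvd_mul_left hdvd)
  have : NeZero q := ⟨hq⟩
  intro h0
  have h := quadGaussSum_mul_inv hζ a b
  rw [h0, zero_mul, hfilter, Finset.sum_singleton] at h
  simp only [Nat.cast_zero, ne_eq, OfNat.ofNat_ne_zero, not_false_eq_true, zero_pow, mul_zero,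
    add_zero, zpow_zero, mul_one] at h
  exact hζ.neZero'.out h.symm

theorem quadGaussSum_ne_zero_of_even (hζ : IsPrimitiveRoot ζ q) {r : ℕ} (hr : r ≠ 0)
    (hq : q = 2 * r) {a b : ℤ} (ha : IsCoprime a r) (hb : Even (a * r + b)) :
    quadGaussSum ζ q a b ≠ 0 := by
  have hfilter : (Finset.range q).filter (fun d : ℕ => (q : ℤ) ∣ 2 * a * d) = {0, r} := by
    ext d
    simp only [Finset.mem_filter, Finset.mem_range, Finset.mem_insert, Finset.mem_singleton, hq]
    constructor
    · rintro ⟨hd, hdvd⟩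
      push_cast at hdvd
      rw [mul_assoc, mul_dvd_mul_iff_left two_ne_zero] at hdvd
      obtain ⟨k, rfl⟩ := Int.natCast_dvd_natCast.mp (ha.symm.dvd_of_dvd_mul_left hdvd)
      rcases k with _ | _ | k
      · simp
      · simp
      · nlinarith
    · rintro (rfl | rfl)
      · simp [Nat.pos_of_ne_zero hr]
      · exact ⟨by omega, ⟨a, by push_cast; ring⟩⟩
  have : NeZero q := ⟨by omega⟩
  have hr2 : ζ ^ (a * r ^ 2 + b * r) = 1 := by
    obtain ⟨k, hk⟩ := hb
    rw [hζ.zpow_eq_one_iff_dvd, hq]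
    exact ⟨k, by push_cast; linear_combination (r : ℤ) * hk⟩
  intro h0
  have h := quadGaussSum_mul_inv hζ a b
  rw [h0, zero_mul, hfilter, Finset.sum_pair (by omega), hr2] at h
  have hq2 : (q : K) * 2 ≠ 0 := by
    refine mul_ne_zero hζ.neZero'.out fun h2 => hζ.neZero'.out ?_
    rw [hq, Nat.cast_mul, Nat.cast_ofNat, h2, zero_mul]
  simp only [Nat.cast_zero, ne_eq, OfNat.ofNat_ne_zero, not_false_eq_true, zero_pow, mul_zero,
    add_zero, zpow_zero] at h
  exact hq2 (by rw [h]; ring)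

end GaussSum

section Admissible

open Complex

theorem Gm_eq_quadGaussSum (p : ℤ) (q : ℕ) (n : ℤ) :
    Gm p q n = quadGaussSum (exp (2 * Real.pi * I / q)) q (-p) n := by
  refine Finset.sum_congr rfl fun k _ => ?_
  rw [← exp_int_mul]
  push_cast
  ring_nf

theorem Gm_ne_zero_of_odd {p : ℤ} {q : ℕ} (hq : Odd q) (hpq : Int.gcd p q = 1) (n : ℤ) :
    Gm p q n ≠ 0 := by
  have hq0 : q ≠ 0 := by rintro rfl; simp at hq
  rw [Gm_eq_quadGaussSum]
  refine quadGaussSum_ne_zero_of_isCoprime (isPrimitiveRoot_exp q hq0) hq0 ?_ n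
  rw [mul_neg, IsCoprime.neg_left_iff]
  exact (Int.isCoprime_two_left.mpr (by exact_mod_cast hq)).mul_left
    (Int.isCoprime_iff_gcd_eq_one.mpr hpq)

theorem Mmat_eq_offDiag (φ : ℝ) : Mmat φ = offDiag (exp (φ * I)) := by
  rw [Mmat, offDiag, ← exp_neg, neg_mul]

theorem exp_arg_mul_I_of_norm_eq_one_mul {c w : ℂ} (hc : ‖c‖ = 1) (hw : w ≠ 0) :
    exp (arg (c * w) * I) = c * exp (arg w * I) := by
  have hcw : c * w ≠ 0 := mul_ne_zero (norm_ne_zero_iff.mp (by simp [hc])) hw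
  have key : ∀ z : ℂ, z ≠ 0 → exp (arg z * I) = z / ‖z‖ := fun z hz => by
    rw [eq_div_iff (by exact_mod_cast norm_ne_zero_iff.mpr hz), mul_comm,
      norm_mul_exp_arg_mul_I]
  rw [key _ hcw, key _ hw, norm_mul, hc, one_mul, mul_div_assoc]

theorem exp_theta_of_modEq {p : ℤ} {q n n₀ : ℕ} (j : ℤ) (hG : Gm p q n₀ ≠ 0)
    (h : (n : ℤ) ≡ n₀ + 2 * p * j [ZMOD q]) :
    exp (theta p q n * I)
      = exp (2 * Real.pi * I / q) ^ (n₀ * j + p * j ^ 2) * exp (theta p q n₀ * I) := by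
  have hq : q ≠ 0 := by rintro rfl; simp [Gm] at hG
  have hζ := isPrimitiveRoot_exp q hq
  have hG' : Gm p q n = exp (2 * Real.pi * I / q) ^ (n₀ * j + p * j ^ 2) * Gm p q n₀ := by
    rw [Gm_eq_quadGaussSum, Gm_eq_quadGaussSum, quadGaussSum_of_modEq hζ j (by simpa using h)]
    ring_nf
  rw [theta, theta, hG']
  exact exp_arg_mul_I_of_norm_eq_one_mul (by rw [norm_zpow, hζ.norm'_eq_one hq, one_zpow]) hG

/-- `hper` says that the exponent `p c² m² + c n₀ m` of the phase of `n₀ + s m` is `N`-periodic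
modulo `q`. -/
theorem trace_prod_Mmat_theta_progression (p : ℤ) {q N s n₀ : ℕ} {c : ℤ} (hq : q = s * N)
    (hc : 2 * p * c ≡ s [ZMOD q]) (hcN : IsCoprime c N) (hper : (s : ℤ) ∣ c * (p * c * N + n₀))
    (hG : Gm p q n₀ ≠ 0) (x y : ℂ) :
    trace ((((List.range N).map (n₀ + s * ·)).reverse.map fun n =>
        x • (1 : Matrix (Fin 2) (Fin 2) ℂ) + y • Mmat (theta p q n)).prod) = 2 * x ^ N := by
  have hq0 : q ≠ 0 := by rintro rfl; simp [Gm] at hG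
  set ζ := exp (2 * Real.pi * I / q)
  have hζ : IsPrimitiveRoot ζ q := isPrimitiveRoot_exp q hq0
  have hphase : ∀ m : ℕ, exp (theta p q (n₀ + s * m) * I)
      = ζ ^ (p * c ^ 2 * m ^ 2 + c * n₀ * m) * exp (theta p q n₀ * I) := fun m => by
    rw [exp_theta_of_modEq (c * m) hG]
    · congr 2
      ring
    · push_cast
      simpa only [mul_assoc] using (hc.mul_right m).symm.add_left n₀
  rw [← List.map_reverse, List.map_map]
  simp only [Function.comp_def, Mmat_eq_offDiag, hphase]
  refine trace_prod_one_add_offDiag_quadratic (hζ.ne_zero hq0) ?_ ?_ _ x y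
  · have hpow : ζ ^ (2 * (p * c ^ 2)) = (ζ ^ s) ^ c := by
      rw [← zpow_natCast, ← zpow_mul, show 2 * (p * c ^ 2) = 2 * p * c * c by ring]
      exact hζ.zpow_eq_zpow_of_modEq (hc.mul_right c)
    rw [hpow]
    exact (hζ.pow (Nat.pos_of_ne_zero hq0) hq).zpow_of_gcd_eq_one c
      (Int.isCoprime_iff_gcd_eq_one.mp hcN)
  · rw [hζ.zpow_eq_one_iff_dvd, hq]
    obtain ⟨k, hk⟩ := hper
    exact ⟨k, by push_cast; linear_combination (N : ℤ) * hk⟩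

theorem admList_of_odd {q : ℕ} (hq : Odd q) : admList q = List.range q := by
  refine List.filter_eq_self.mpr fun n _ => ?_
  obtain ⟨k, rfl⟩ := hq
  rw [decide_eq_true_eq, Adm]
  omega

theorem admList_two_mul (r : ℕ) : admList (2 * r) = (List.range r).map (r % 2 + 2 * ·) := by
  rw [← List.filter_range_two_mul_mod_two (Nat.mod_lt r two_pos), admList]
  refine List.filter_congr fun n _ => ?_
  rw [decide_eq_decide, Adm]
  omega

theorem trace_prod_admList_of_odd (p : ℤ) {q : ℕ} (hq : Odd q) (hpq : Int.gcd p q = 1)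
    (x y : ℂ) :
    trace (((admList q).reverse.map fun n =>
        x • (1 : Matrix (Fin 2) (Fin 2) ℂ) + y • Mmat (theta p q n)).prod) = 2 * x ^ q := by
  obtain ⟨c, v, hcv⟩ := (Int.isCoprime_two_left.mpr (by exact_mod_cast hq)).mul_left
    (Int.isCoprime_iff_gcd_eq_one.mpr hpq)
  have h := trace_prod_Mmat_theta_progression p (s := 1) (n₀ := 0) (c := c) (one_mul q).symm
    (Int.modEq_iff_dvd.mpr ⟨v, by linear_combination -hcv⟩) ⟨2 * p, v, by linear_combination hcv⟩
    (one_dvd _) (Gm_ne_zero_of_odd hq hpq 0) x y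
  simpa [admList_of_odd hq] using h

theorem trace_prod_admList_two_mul (p : ℤ) {r : ℕ} (hr : r ≠ 0)
    (hpr : Int.gcd p (2 * r : ℕ) = 1) (x y : ℂ) :
    trace (((admList (2 * r)).reverse.map fun n =>
        x • (1 : Matrix (Fin 2) (Fin 2) ℂ) + y • Mmat (theta p (2 * r) n)).prod) = 2 * x ^ r := by
  have hcop := Int.isCoprime_iff_gcd_eq_one.mpr hpr
  obtain ⟨k, hk⟩ : Odd p :=
    Int.isCoprime_two_right.mp (hcop.of_isCoprime_of_dvd_right ⟨r, by push_cast; ring⟩)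
  obtain ⟨c, v, hcv⟩ :=
    hcop.of_isCoprime_of_dvd_right (⟨2, by push_cast; ring⟩ : (r : ℤ) ∣ (2 * r : ℕ))
  have hr2 : ((r % 2 : ℕ) : ℤ) = r - 2 * (r / 2 : ℕ) := by omega
  have hG : Gm p (2 * r) (r % 2 : ℕ) ≠ 0 := by
    rw [Gm_eq_quadGaussSum]
    refine quadGaussSum_ne_zero_of_even (isPrimitiveRoot_exp _ (by omega)) hr rfl
      (IsCoprime.neg_left_iff _ _ |>.mpr ⟨c, v, hcv⟩) ⟨-(k * r) - (r / 2 : ℕ), ?_⟩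
    rw [hk, hr2]
    ring
  have hper : (2 : ℤ) ∣ c * (p * c * r + (r % 2 : ℕ)) := by
    rcases Int.even_or_odd c with hc | ⟨m, rfl⟩
    · exact (even_iff_two_dvd.mp hc).mul_right _
    · refine Dvd.dvd.mul_left ⟨r * (2 * k * m + k + m) + r - (r / 2 : ℕ), ?_⟩ _
      rw [hk, hr2]
      ring
  have h := trace_prod_Mmat_theta_progression p (s := 2) (n₀ := r % 2) (c := c) rfl
    (Int.modEq_iff_dvd.mpr ⟨v, by push_cast; linear_combination -2 * hcv⟩)
    ⟨p, v, by linear_combination hcv⟩ hper hG x y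
  rw [admList_two_mul]
  simpa using h

end Admissible

theorem stmt0 (p : ℤ) (q : ℕ) (hq : 1 ≤ q) (hpq : Int.gcd p (q : ℤ) = 1) (α : ℝ) :
    (Odd q →
      (1 / 2 : ℂ) * Matrix.trace
        (((admList q).reverse.map (fun n =>
          (Real.cos α : ℂ) • (1 : Matrix (Fin 2) (Fin 2) ℂ)
            + (Complex.I * (Real.sin α : ℂ)) • Mmat (theta p q n))).prod)
        = (Real.cos α : ℂ) ^ q) ∧
    (Even q →
      (1 / 2 : ℂ) * Matrix.trace
        (((admList q).reverse.map (fun n =>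
          (Real.cos α : ℂ) • (1 : Matrix (Fin 2) (Fin 2) ℂ)
            + (Complex.I * (Real.sin α : ℂ)) • Mmat (theta p q n))).prod)
        = (Real.cos α : ℂ) ^ (q / 2)) := by
  refine ⟨fun hodd => ?_, fun heven => ?_⟩
  · rw [trace_prod_admList_of_odd p hodd hpq]
    ring
  · obtain ⟨r, rfl⟩ := heven.two_dvd
    rw [trace_prod_admList_two_mul p (by omega) hpq, Nat.mul_div_cancel_left r two_pos]
    ring
end

section
/- Let q ≥ 2 be an even integer, let p be an integer coprime to q (so p is odd), and let a ∈ ℤ satisfy pa ≡ 1 (mod q). Then for every integer n with 0 ≤ n < q, writing ε ∈ {0,1} for the parity of n (ε ≡ n mod 2, so that (n² − ε)/4 ∈ ℤ), one has G(−p,n,q) = exp(2πi a (n² − ε)/(4q)) · G(−p,ε,q). -/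
noncomputable def Efun (q : ℕ) (t : ℤ) : ℂ :=
  Complex.exp (2 * Real.pi * Complex.I * (t : ℂ) / (q : ℂ))

lemma Efun_congr (q : ℕ) (hq : q ≠ 0) {s t : ℤ} (h : s ≡ t [ZMOD (q : ℤ)]) :
    Efun q s = Efun q t := by
  obtain ⟨m, hm⟩ := (Int.ModEq.dvd h)
  have ht : (t : ℂ) = s + q * m := by
    have : t = s + q * m := by linarith
    exact_mod_cast congrArg (Int.cast : ℤ → ℂ) this
  have hqc : (q : ℂ) ≠ 0 := Nat.cast_ne_zero.mpr hq
  unfold Efun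
  rw [ht, show 2 * Real.pi * Complex.I * ((s : ℂ) + q * m) / q
      = 2 * Real.pi * Complex.I * (s : ℂ) / q + m * (2 * Real.pi * Complex.I) by
    field_simp]
  rw [Complex.exp_add, Complex.exp_int_mul_two_pi_mul_I, mul_one]

lemma Efun_add (q : ℕ) (t s : ℤ) : Efun q (t + s) = Efun q t * Efun q s := by
  unfold Efun
  rw [← Complex.exp_add]
  congr 1
  push_cast
  ring

lemma Gm_eq (q : ℕ) [NeZero q] (p n : ℤ) :
    Gm p q n = ∑ x : ZMod q, Efun q (-p * (x.val : ℤ) ^ 2 + n * (x.val : ℤ)) := by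
  rw [Gm]
  refine Finset.sum_nbij' (fun k => ((k : ZMod q))) (fun x => x.val) ?_ ?_ ?_ ?_ ?_
  · intros; exact Finset.mem_univ _
  · intro x _; exact Finset.mem_range.mpr (ZMod.val_lt x)
  · intro k hk; exact ZMod.val_cast_of_lt (Finset.mem_range.mp hk)
  · intro x _; simp [ZMod.natCast_val, ZMod.cast_id]
  · intro k hk
    rw [ZMod.val_cast_of_lt (Finset.mem_range.mp hk)]
    unfold Efun
    rw [mul_div_assoc]
    congr 2
    push_cast
    ring

theorem stmt10 (q : ℕ) (hq : 2 ≤ q) (heven : Even q)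
    (p : ℤ) (hpq : Int.gcd p (q : ℤ) = 1)
    (a : ℤ) (ha : p * a ≡ 1 [ZMOD (q : ℤ)]) :
    ∀ n : ℕ, n < q →
      Gm p q (n : ℤ)
        = Complex.exp (2 * Real.pi * Complex.I * (a : ℂ)
              * (((n : ℂ) ^ 2 - ((n % 2 : ℕ) : ℂ)) / (4 * (q : ℂ))))
          * Gm p q ((n % 2 : ℕ) : ℤ) := by
  intro n hn
  haveI : NeZero q := ⟨by omega⟩
  have hq0 : q ≠ 0 := by omega
  set ε : ℤ := ((n % 2 : ℕ) : ℤ) with hεdef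
  set m : ℤ := ((n / 2 : ℕ) : ℤ) with hmdef
  have hn2 : (n : ℤ) = 2 * m + ε := by
    have := Nat.div_add_mod n 2
    omega
  have hε01 : ε = 0 ∨ ε = 1 := by omega
  set N : ℤ := m * (m + ε) with hNdef
  have h4N : 4 * N = (n : ℤ) ^ 2 - ε := by
    rcases hε01 with h | h <;> rw [hNdef, hn2, h] <;> ring
  have hdvd : (q : ℤ) ∣ p * a - 1 := by
    exact Int.ModEq.dvd ha.symm
  set c : ZMod q := ((a * m : ℤ) : ZMod q) with hcdef
  have key : ∀ k : ℤ,
      -p * (k + a * m) ^ 2 + (n : ℤ) * (k + a * m) ≡ (-p * k ^ 2 + ε * k) + a * N [ZMOD (q : ℤ)] := by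
    intro k
    have heq : ((-p * k ^ 2 + ε * k) + a * N) - (-p * (k + a * m) ^ 2 + (n : ℤ) * (k + a * m))
        = (p * a - 1) * (2 * m * k + a * m ^ 2) := by
      rw [hNdef, hn2]; ring
    exact (Int.modEq_iff_dvd.mpr (heq ▸ hdvd.mul_right _))
  have hvalcong : ∀ x : ZMod q, (((x + c).val : ℤ)) ≡ (x.val : ℤ) + a * m [ZMOD (q : ℤ)] := by
    intro x
    rw [← ZMod.intCast_eq_intCast_iff]
    push_cast [ZMod.natCast_val, ZMod.cast_id]
    rw [hcdef]
    push_cast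
    ring
  calc Gm p q (n : ℤ)
      = ∑ x : ZMod q, Efun q (-p * (x.val : ℤ) ^ 2 + (n : ℤ) * (x.val : ℤ)) := Gm_eq q p n
    _ = ∑ x : ZMod q,
          Efun q (-p * (((x + c).val : ℤ)) ^ 2 + (n : ℤ) * (((x + c).val : ℤ))) :=
        (Fintype.sum_equiv (Equiv.addRight c) _
          (fun y : ZMod q => Efun q (-p * (y.val : ℤ) ^ 2 + (n : ℤ) * (y.val : ℤ)))
          fun x => rfl).symm
    _ = ∑ x : ZMod q, Efun q (a * N) * Efun q (-p * (x.val : ℤ) ^ 2 + ε * (x.val : ℤ)) := by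
        refine Finset.sum_congr rfl fun x _ => ?_
        have h1 : (-p * (((x + c).val : ℤ)) ^ 2 + (n : ℤ) * (((x + c).val : ℤ)))
            ≡ (-p * ((x.val : ℤ) + a * m) ^ 2 + (n : ℤ) * ((x.val : ℤ) + a * m)) [ZMOD (q : ℤ)] :=
          (Int.ModEq.mul_left (-p) ((hvalcong x).pow 2)).add ((hvalcong x).mul_left _)
        rw [Efun_congr q hq0 (h1.trans (key _)), add_comm, Efun_add]
    _ = Efun q (a * N) * ∑ x : ZMod q, Efun q (-p * (x.val : ℤ) ^ 2 + ε * (x.val : ℤ)) :=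
        (Finset.mul_sum _ _ _).symm
    _ = _ := by
        rw [← Gm_eq q p ε]
        congr 1
        unfold Efun
        congr 1
        have hcast : (n : ℂ) ^ 2 - ((n % 2 : ℕ) : ℂ) = 4 * (N : ℂ) := by
          have e2 : ((n % 2 : ℕ) : ℂ) = ((ε : ℤ) : ℂ) := by rw [hεdef]; norm_cast
          rw [e2]
          have h := congrArg (Int.cast : ℤ → ℂ) h4N
          push_cast at h
          linear_combination -h
        rw [hcast]
        have hqc : (q : ℂ) ≠ 0 := Nat.cast_ne_zero.mpr hq0
        push_cast
        field_simp
end
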